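/- Let φ be a non-degenerate trace-valued (σ,ε)-sesquilinear form on V and let A and B be maximal totally isotropic subspaces of V with A ∩ B = 0. Then the subspace (A + B)⊥ contains no nonzero isotropic vector. -/

import Mathlib

open MulOpposite

variable {K : Type*} [DivisionRing K]

/-- `σ` is an anti-automorphism of the division ring `K`. -/
def IsAntiAuto (σ : K → K) : Prop :=
  Function.Bijective σ ∧ (∀ a b : K, σ (a + b) = σ a + σ b) ∧
    ∀ a b : K, σ (a * b) = σ b * σ a

/-- `(σ, ε)` is an admissible pair: `σ` is an anti-automorphism, `ε ≠ 0`,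
`σ ε = ε⁻¹` and `σ ∘ σ` is conjugation by `ε`. -/
def IsAdmissiblePair (σ : K → K) (ε : K) : Prop :=
  IsAntiAuto σ ∧ ε ≠ 0 ∧ σ ε = ε⁻¹ ∧ ∀ t : K, σ (σ t) = ε * t * ε⁻¹

variable {V : Type*} [AddCommGroup V] [Module Kᵐᵒᵖ V]

/-- `φ` is a reflexive `(σ, ε)`-sesquilinear form on the right `K`-vector space `V`
(a right `K`-vector space is a left `Kᵐᵒᵖ`-vector space; right scalar multiplication
of `x` by `α` is `op α • x`). -/
def IsSesq (σ : K → K) (ε : K) (φ : V → V → K) : Prop :=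
  (∀ x y z : V, φ (x + y) z = φ x z + φ y z) ∧
  (∀ x y z : V, φ x (y + z) = φ x y + φ x z) ∧
  (∀ (α : K) (x y : V), φ (op α • x) y = σ α * φ x y) ∧
  (∀ (β : K) (x y : V), φ x (op β • y) = φ x y * β) ∧
  ∀ x y : V, φ y x = σ (φ x y) * ε

/-- A subspace `S` of `V` is totally isotropic for `φ` if `φ` vanishes identically on it. -/
def IsTotIso (φ : V → V → K) (S : Submodule Kᵐᵒᵖ V) : Prop :=
  ∀ x ∈ S, ∀ y ∈ S, φ x y = 0

/-- A maximal totally isotropic subspace: totally isotropic and maximal under inclusion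
among totally isotropic subspaces. -/
def IsMaxTotIso (φ : V → V → K) (S : Submodule Kᵐᵒᵖ V) : Prop :=
  IsTotIso φ S ∧ ∀ T : Submodule Kᵐᵒᵖ V, IsTotIso φ T → S ≤ T → T = S

/-- `φ` is trace-valued: every `φ(x,x)` is of the form `t + σ(t)ε`. -/
def IsTraceValued (σ : K → K) (ε : K) (φ : V → V → K) : Prop :=
  ∀ x : V, ∃ t : K, φ x x = t + σ t * ε

/-!
An isotropic vector `x` orthogonal to a totally isotropic subspace `S` spans, together with `S`,
a totally isotropic subspace; so if `S` is maximal then `x ∈ S`. Applied to `S = A` and `S = B`,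
an isotropic vector of `(A + B)⊥` lies in `A ∩ B = 0`.
-/

section

variable {σ : K → K} {ε : K} {φ : V → V → K}

namespace IsSesq

theorem zero_left (hφ : IsSesq σ ε φ) (y : V) : φ 0 y = 0 := by
  simpa using hφ.1 0 0 y

theorem zero_right (hφ : IsSesq σ ε φ) (x : V) : φ x 0 = 0 := by
  simpa using hφ.2.1 x 0 0

theorem eq_zero_symm (hφ : IsSesq σ ε φ) {x y : V} (h : φ y x = 0) :
    φ x y = 0 := by
  -- reflexivity at `(0, 0)` gives `σ 0 * ε = φ 0 0 = 0`
  have hσε : σ 0 * ε = 0 := by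
    have := hφ.2.2.2.2 0 0
    rwa [hφ.zero_left, eq_comm] at this
  rw [hφ.2.2.2.2 y x, h, hσε]

theorem isTotIso_span (hφ : IsSesq σ ε φ) {s : Set V} (hs : ∀ a ∈ s, ∀ b ∈ s, φ a b = 0) :
    IsTotIso φ (Submodule.span Kᵐᵒᵖ s) := by
  have hright : ∀ a ∈ s, ∀ v ∈ Submodule.span Kᵐᵒᵖ s, φ a v = 0 := by
    intro a ha v hv
    induction hv using Submodule.span_induction with
    | mem b hb => exact hs a ha b hb
    | zero => exact hφ.zero_right a
    | add v w _ _ hv hw => rw [hφ.2.1, hv, hw, add_zero]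
    | smul r v _ hv => rw [← op_unop r, hφ.2.2.2.1, hv, zero_mul]
  intro u hu v hv
  induction hu using Submodule.span_induction with
  | mem a ha => exact hright a ha v hv
  | zero => exact hφ.zero_left v
  | add u w _ _ hu hw => rw [hφ.1, hu, hw, add_zero]
  | smul r u _ hu => rw [← op_unop r, hφ.2.2.1, hu, mul_zero]

end IsSesq

theorem IsTotIso.sup_span_singleton (hφ : IsSesq σ ε φ) {S : Submodule Kᵐᵒᵖ V}
    (hS : IsTotIso φ S) {x : V} (hSx : ∀ y ∈ S, φ y x = 0) (hxx : φ x x = 0) :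
    IsTotIso φ (S ⊔ Submodule.span Kᵐᵒᵖ {x}) := by
  rw [← S.span_eq, ← Submodule.span_union]
  apply hφ.isTotIso_span
  rintro a (ha | rfl) b (hb | rfl)
  · exact hS a ha b hb
  · exact hSx a ha
  · exact hφ.eq_zero_symm (hSx b hb)
  · exact hxx

theorem IsMaxTotIso.mem_of_isotropic_of_orthogonal (hφ : IsSesq σ ε φ) {S : Submodule Kᵐᵒᵖ V}
    (hS : IsMaxTotIso φ S) {x : V} (hSx : ∀ y ∈ S, φ y x = 0) (hxx : φ x x = 0) : x ∈ S := by
  rw [← hS.2 _ (hS.1.sup_span_singleton hφ hSx hxx) le_sup_left]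
  exact Submodule.mem_sup_right (Submodule.mem_span_singleton_self x)

end

theorem stmt_13_general (σ : K → K) (ε : K)
    (φ : V → V → K) (hφ : IsSesq σ ε φ)
    (A B : Submodule Kᵐᵒᵖ V) (hA : IsMaxTotIso φ A) (hB : IsMaxTotIso φ B)
    (hAB : A ⊓ B = ⊥) :
    ∀ x : V, (∀ y ∈ A ⊔ B, φ y x = 0) → φ x x = 0 → x = 0 := by
  intro x hx hxx
  have hxA : x ∈ A :=
    hA.mem_of_isotropic_of_orthogonal hφ (fun y hy => hx y (Submodule.mem_sup_left hy)) hxx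
  have hxB : x ∈ B :=
    hB.mem_of_isotropic_of_orthogonal hφ (fun y hy => hx y (Submodule.mem_sup_right hy)) hxx
  simpa [hAB] using Submodule.mem_inf.2 ⟨hxA, hxB⟩

/-- If `φ` is non-degenerate and trace-valued and `A, B` are maximal
totally isotropic subspaces with `A ∩ B = 0`, then `(A + B)⊥` contains no nonzero
isotropic vector. -/
theorem stmt_13 (σ : K → K) (ε : K) (hpair : IsAdmissiblePair σ ε)
    (φ : V → V → K) (hφ : IsSesq σ ε φ) (htv : IsTraceValued σ ε φ)
    (hnd : ∀ a : V, (∀ x : V, φ a x = 0) → a = 0)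
    (A B : Submodule Kᵐᵒᵖ V) (hA : IsMaxTotIso φ A) (hB : IsMaxTotIso φ B)
    (hAB : A ⊓ B = ⊥) :
    ∀ x : V, (∀ y ∈ A ⊔ B, φ y x = 0) → φ x x = 0 → x = 0 :=
  stmt_13_general σ ε φ hφ A B hA hB hAB
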